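/- Let T be a balanced rooted tree with l levels where every vertex on level j has c_j children, with W_j defined by W_0 = 1, W_1 = x, W_j = x·W_{j-1} - c_{l+1-j}·W_{j-2}. Let Φ = {l} ∪ {j : 1 ≤ j ≤ l-1 and c_{l-j} > 1}. Then the set of distinct real eigenvalues of the adjacency matrix of T is exactly the union over j ∈ Φ of the real root sets of W_j. -/

import Mathlib

/-!
For a real `x` put `ψ v = W_{l - lvl v}(x)`. The recurrence defining `W` says that `ψ` satisfies
the eigenvalue equation `A ψ = x ψ` at every vertex, except for a defect `W_l(x)` at the root.
So `ψ` is an eigenvector when `W_l(x) = 0`; and when `W_j(x) = 0` for some vertex `u` on level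
`l - j` with two children `v₁, v₂`, the restriction of `ψ` to the subtree of `v₁` minus its
restriction to the subtree of `v₂` is an eigenvector.

Conversely, comparing an eigenvector `f` with `ψ` from the leaves upwards gives
`W_{l + 1 - lvl u}(x) f(u) = W_{l - lvl u}(x) f(parent u)`. Going down from the root, this forces
`f = 0` unless some `W_j(x)` with `j ∈ Φ` vanishes: a root of `W_j` with `j ∉ Φ` only matters at a
vertex that is the only child of its parent, and there the eigenvalue equation at the parent
gives `f(u) = 0` directly.
-/

open Polynomial

/-- A rooted tree on the vertex set `Fin (n+1)`, encoded by a parent function: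
the root is `0`, and every non-root vertex has a parent strictly smaller than
itself (which guarantees acyclicity and connectedness). -/
structure ParentTree (n : ℕ) where
  parent : Fin (n + 1) → Fin (n + 1)
  parent_lt : ∀ i : Fin (n + 1), i ≠ 0 → parent i < i
  parent_zero : parent 0 = 0

namespace ParentTree

variable {n : ℕ}

/-- The set of children of a vertex. -/
def children (T : ParentTree n) (v : Fin (n + 1)) : Finset (Fin (n + 1)) :=
  Finset.univ.filter fun w => T.parent w = v ∧ w ≠ v

/-- The adjacency matrix of a rooted tree, with entries in `R`. -/
def adjMat (T : ParentTree n) (R : Type) [Zero R] [One R] :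
    Matrix (Fin (n + 1)) (Fin (n + 1)) R :=
  Matrix.of fun i j => if i ≠ j ∧ (T.parent i = j ∨ T.parent j = i) then 1 else 0

/-- The degree of a vertex. -/
def deg (T : ParentTree n) (v : Fin (n + 1)) : ℕ :=
  (T.children v).card + if v = 0 then 0 else 1

end ParentTree

open Matrix

theorem Matrix.isRoot_charpoly_iff_exists_mulVec_eq_smul {ι K : Type*} [Fintype ι]
    [DecidableEq ι] [Field K] (A : Matrix ι ι K) (x : K) :
    A.charpoly.IsRoot x ↔ ∃ f ≠ 0, A *ᵥ f = x • f := by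
  rw [← Matrix.charpoly_toLin', ← Module.End.hasEigenvalue_iff_isRoot_charpoly,
    Module.End.hasEigenvalue_iff, Submodule.ne_bot_iff]
  simp only [Module.End.mem_eigenspace_iff, Matrix.toLin'_apply]
  exact exists_congr fun f => and_comm

namespace ParentTree

variable {n : ℕ} (T : ParentTree n)

/-- The value of `f` at the parent of `v`, where the root is given a virtual parent
carrying the value `r`. -/
def atParent {R : Type*} (r : R) (f : Fin (n + 1) → R) (v : Fin (n + 1)) : R :=
  if v = 0 then r else f (T.parent v)

/-- The eigenvalue equation `A f = x f` of the adjacency matrix, with the root given a virtual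
parent carrying the value `r`; for `r = 0` it is the actual eigenvalue equation. -/
def IsEigenfunction (x r : ℝ) (f : Fin (n + 1) → ℝ) : Prop :=
  ∀ v, ∑ w ∈ T.children v, f w + T.atParent r f v = x * f v

def subtree (v : Fin (n + 1)) : Set (Fin (n + 1)) :=
  {w | Relation.ReflTransGen (fun a b => b ∈ T.children a) v w}

structure IsLevelFn (lvl : Fin (n + 1) → ℕ) : Prop where
  lvl_zero : lvl 0 = 1
  lvl_eq_lvl_parent_add_one : ∀ v, v ≠ 0 → lvl v = lvl (T.parent v) + 1

variable {T}

theorem mem_children {v w : Fin (n + 1)} : w ∈ T.children v ↔ T.parent w = v ∧ w ≠ v := by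
  simp [children]

theorem parent_lt_of_mem_children {v w : Fin (n + 1)} (h : w ∈ T.children v) : v < w := by
  obtain ⟨rfl, hne⟩ := mem_children.mp h
  exact T.parent_lt w fun h0 => hne (by rw [h0, T.parent_zero])

theorem ne_zero_of_mem_children {v w : Fin (n + 1)} (h : w ∈ T.children v) : w ≠ 0 :=
  (Fin.zero_le v).trans_lt (parent_lt_of_mem_children h) |>.ne'

theorem mem_children_parent {v : Fin (n + 1)} (hv : v ≠ 0) : v ∈ T.children (T.parent v) :=
  mem_children.mpr ⟨rfl, (T.parent_lt v hv).ne'⟩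

theorem parent_le (v : Fin (n + 1)) : T.parent v ≤ v := by
  rcases eq_or_ne v 0 with rfl | hv
  · rw [T.parent_zero]
  · exact (T.parent_lt v hv).le

theorem adjMat_mulVec_apply {R : Type} [NonAssocSemiring R] (f : Fin (n + 1) → R)
    (v : Fin (n + 1)) :
    (T.adjMat R *ᵥ f) v = ∑ w ∈ T.children v, f w + T.atParent 0 f v := by
  have hsplit : ∀ w, (if v ≠ w ∧ (T.parent v = w ∨ T.parent w = v) then f w else 0) =
      (if w ∈ T.children v then f w else 0) + if v ≠ 0 ∧ T.parent v = w then f w else 0 := by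
    intro w
    have h1 : w ∈ T.children v → T.parent v ≠ w := fun hw =>
      ((parent_le v).trans_lt (parent_lt_of_mem_children hw)).ne
    have h2 : v ≠ 0 → T.parent v ≠ v := fun hv => (T.parent_lt v hv).ne
    simp only [mem_children] at h1 ⊢
    split_ifs <;> grind [T.parent_zero]
  simp only [Matrix.mulVec, dotProduct, adjMat, Matrix.of_apply, ite_mul, one_mul, zero_mul, hsplit,
    Finset.sum_add_distrib, Finset.sum_ite_mem, Finset.univ_inter, atParent]
  by_cases hv : v = 0 <;> simp [hv]

theorem mulVec_eq_smul_iff_isEigenfunction {x : ℝ} {f : Fin (n + 1) → ℝ} :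
    T.adjMat ℝ *ᵥ f = x • f ↔ T.IsEigenfunction x 0 f := by
  simp only [funext_iff, adjMat_mulVec_apply, Pi.smul_apply, smul_eq_mul, IsEigenfunction]

@[simp]
theorem atParent_zero {R : Type*} (r : R) (f : Fin (n + 1) → R) : T.atParent r f 0 = r :=
  if_pos rfl

theorem atParent_of_ne_zero {R : Type*} (r : R) (f : Fin (n + 1) → R) {v : Fin (n + 1)}
    (hv : v ≠ 0) : T.atParent r f v = f (T.parent v) :=
  if_neg hv

theorem mem_subtree_self (v : Fin (n + 1)) : v ∈ T.subtree v :=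
  Relation.ReflTransGen.refl

theorem mem_subtree_of_mem_children {v w u : Fin (n + 1)} (hw : w ∈ T.subtree v)
    (hu : u ∈ T.children w) : u ∈ T.subtree v :=
  Relation.ReflTransGen.tail hw hu

theorem parent_mem_subtree {v w : Fin (n + 1)} (hw : w ∈ T.subtree v) (hne : w ≠ v) :
    T.parent w ∈ T.subtree v := by
  obtain rfl | ⟨u, hu, huw⟩ := Relation.ReflTransGen.cases_tail hw
  · exact absurd rfl hne
  · rwa [(mem_children.mp huw).1]

theorem le_of_mem_subtree {v w : Fin (n + 1)} (hw : w ∈ T.subtree v) : v ≤ w := by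
  induction hw with
  | refl => exact le_rfl
  | tail _ hu ih => exact ih.trans (parent_lt_of_mem_children hu).le

theorem parent_notMem_subtree {v : Fin (n + 1)} (hv : v ≠ 0) : T.parent v ∉ T.subtree v :=
  fun h => (T.parent_lt v hv).not_ge (le_of_mem_subtree h)

theorem disjoint_subtree_of_mem_children {u v₁ v₂ : Fin (n + 1)} (h₁ : v₁ ∈ T.children u)
    (h₂ : v₂ ∈ T.children u) (hne : v₁ ≠ v₂) : Disjoint (T.subtree v₁) (T.subtree v₂) := by
  suffices ∀ w ∈ T.subtree v₁, w ∉ T.subtree v₂ from Set.disjoint_left.mpr this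
  intro w hw₁
  induction hw₁ with
  | refl =>
    intro hw₂
    have := parent_mem_subtree hw₂ hne
    rw [(mem_children.mp h₁).1] at this
    exact (parent_lt_of_mem_children h₂).not_ge (le_of_mem_subtree this)
  | @tail w w' hw₁ hw' ih =>
    intro hw₂
    have hwu : w' ≠ v₂ := by
      rintro rfl
      rw [(mem_children.mp h₂).1.symm.trans (mem_children.mp hw').1] at h₁
      exact (parent_lt_of_mem_children h₁).not_ge (le_of_mem_subtree hw₁)
    exact ih ((mem_children.mp hw').1 ▸ parent_mem_subtree hw₂ hwu)

end ParentTree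

namespace ParentTree.IsEigenfunction

variable {n : ℕ} {T : ParentTree n} {x r : ℝ} {ψ f : Fin (n + 1) → ℝ}

/-- Comparing `f` with `ψ` from the leaves upwards: at a vertex `u`, both eigenvalue equations
express the sum over the children of `u` in terms of the values at `u` and at its parent. -/
theorem atParent_mul_eq (hψ : T.IsEigenfunction x r ψ) (hf : T.IsEigenfunction x 0 f)
    (u : Fin (n + 1)) : T.atParent r ψ u * f u = ψ u * T.atParent 0 f u := by
  induction u using WellFoundedGT.induction with
  | ind u ih =>
    have hchildren : ψ u * ∑ w ∈ T.children u, f w = (∑ w ∈ T.children u, ψ w) * f u := by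
      rw [Finset.mul_sum, Finset.sum_mul]
      refine Finset.sum_congr rfl fun w hw => ?_
      have := ih w (parent_lt_of_mem_children hw)
      rwa [atParent_of_ne_zero _ _ (ne_zero_of_mem_children hw),
        atParent_of_ne_zero _ _ (ne_zero_of_mem_children hw), (mem_children.mp hw).1] at this
    linear_combination hchildren - ψ u * hf u + f u * hψ u

theorem eq_zero (hψ : T.IsEigenfunction x r ψ) (hf : T.IsEigenfunction x 0 f) (hr : r ≠ 0)
    (hcard : ∀ u, u ≠ 0 → ψ (T.parent u) = 0 → (T.children (T.parent u)).card ≤ 1) :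
    f = 0 := by
  funext u
  induction u using WellFoundedLT.induction with
  | ind u ih =>
    have key := hψ.atParent_mul_eq hf u
    rcases eq_or_ne u 0 with rfl | hu
    · simpa [hr] using key
    have hp : f (T.parent u) = 0 := ih _ (T.parent_lt u hu)
    rw [atParent_of_ne_zero _ _ hu, atParent_of_ne_zero _ _ hu, hp, mul_zero] at key
    rcases mul_eq_zero.mp key with hψp | hfu
    · -- `u` is the only child of its parent, so the equation at the parent forces `f u = 0`
      have hsingle : T.children (T.parent u) = {u} :=
        Finset.eq_singleton_iff_unique_mem.mpr ⟨mem_children_parent hu,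
          fun w hw => Finset.card_le_one.mp (hcard u hu hψp) w hw u (mem_children_parent hu)⟩
      have hpp : T.atParent 0 f (T.parent u) = 0 := by
        unfold atParent
        split_ifs with h
        · rfl
        · exact ih _ ((T.parent_lt _ h).trans (T.parent_lt u hu))
      simpa [hsingle, hpp, hp] using hf (T.parent u)
    · exact hfu

theorem indicator_subtree (hψ : T.IsEigenfunction x r ψ) (v w : Fin (n + 1)) :
    ∑ u ∈ T.children w, (T.subtree v).indicator ψ u
        + T.atParent 0 ((T.subtree v).indicator ψ) w =
      x * (T.subtree v).indicator ψ w - (if w = v then T.atParent r ψ v else 0)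
        + if v ∈ T.children w then ψ v else 0 := by
  by_cases hw : w ∈ T.subtree v
  · have hv : v ∉ T.children w := fun h =>
      (parent_lt_of_mem_children h).not_ge (le_of_mem_subtree hw)
    have hsum : ∑ u ∈ T.children w, (T.subtree v).indicator ψ u = ∑ u ∈ T.children w, ψ u :=
      Finset.sum_congr rfl fun u hu =>
        Set.indicator_of_mem (mem_subtree_of_mem_children hw hu) ψ
    rw [hsum, Set.indicator_of_mem hw, if_neg hv]
    rcases eq_or_ne w v with rfl | hne
    · have hp : T.atParent 0 ((T.subtree w).indicator ψ) w = 0 := by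
        unfold atParent
        split_ifs with h
        · rfl
        · exact Set.indicator_of_notMem (parent_notMem_subtree h) ψ
      rw [hp, if_pos rfl]
      linear_combination hψ w
    · have hw0 : w ≠ 0 := ((Fin.zero_le v).trans_lt ((le_of_mem_subtree hw).lt_of_ne' hne)).ne'
      have := hψ w
      rw [atParent_of_ne_zero _ _ hw0] at this ⊢
      rw [Set.indicator_of_mem (parent_mem_subtree hw hne), if_neg hne]
      linear_combination this
  · have hsum : ∑ u ∈ T.children w, (T.subtree v).indicator ψ u =
        if v ∈ T.children w then ψ v else 0 := by
      rw [← Finset.sum_ite_eq']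
      refine Finset.sum_congr rfl fun u hu => ?_
      split_ifs with huv
      · subst huv
        exact Set.indicator_of_mem (mem_subtree_self _) ψ
      · refine Set.indicator_of_notMem (fun hu' => hw ?_) ψ
        exact (mem_children.mp hu).1 ▸ parent_mem_subtree hu' huv
    have hp : T.atParent 0 ((T.subtree v).indicator ψ) w = 0 := by
      unfold atParent
      split_ifs with h
      · rfl
      · exact Set.indicator_of_notMem
          (fun hp => hw (mem_subtree_of_mem_children hp (mem_children_parent h))) ψ
    have hwv : w ≠ v := fun h => hw (h ▸ mem_subtree_self w)
    rw [hsum, hp, Set.indicator_of_notMem hw, if_neg hwv]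
    ring

/-- The defects of `indicator_subtree` at `v₁` and `v₂` vanish because `ψ u = 0`, and those at
`u` cancel because `ψ v₁ = ψ v₂`. -/
theorem indicator_subtree_sub {u v₁ v₂ : Fin (n + 1)} (hψ : T.IsEigenfunction x r ψ)
    (h₁ : v₁ ∈ T.children u) (h₂ : v₂ ∈ T.children u) (hu : ψ u = 0) (hψv : ψ v₁ = ψ v₂) :
    T.IsEigenfunction x 0 ((T.subtree v₁).indicator ψ - (T.subtree v₂).indicator ψ) := by
  intro w
  have hiff : ∀ v ∈ T.children u, v ∈ T.children w ↔ w = u := fun v hv =>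
    ⟨fun h => (mem_children.mp h).1.symm.trans (mem_children.mp hv).1, fun h => h ▸ hv⟩
  have hsub : T.atParent 0 ((T.subtree v₁).indicator ψ - (T.subtree v₂).indicator ψ) w =
      T.atParent 0 ((T.subtree v₁).indicator ψ) w -
        T.atParent 0 ((T.subtree v₂).indicator ψ) w := by
    unfold atParent
    split_ifs <;> simp
  have e₁ := hψ.indicator_subtree v₁ w
  have e₂ := hψ.indicator_subtree v₂ w
  simp only [hiff v₁ h₁, hiff v₂ h₂, atParent_of_ne_zero _ _ (ne_zero_of_mem_children h₁),
    atParent_of_ne_zero _ _ (ne_zero_of_mem_children h₂), (mem_children.mp h₁).1,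
    (mem_children.mp h₂).1, hu, ite_self, hψv] at e₁ e₂
  simp only [Pi.sub_apply, Finset.sum_sub_distrib, hsub]
  linear_combination e₁ - e₂

end ParentTree.IsEigenfunction

namespace ParentTree.IsLevelFn

variable {n : ℕ} {T : ParentTree n} {lvl : Fin (n + 1) → ℕ}

theorem one_le (hL : T.IsLevelFn lvl) (v : Fin (n + 1)) : 1 ≤ lvl v := by
  rcases eq_or_ne v 0 with rfl | hv
  · exact hL.lvl_zero.ge
  · rw [hL.lvl_eq_lvl_parent_add_one v hv]
    omega

theorem lvl_of_mem_children (hL : T.IsLevelFn lvl) {v w : Fin (n + 1)} (h : w ∈ T.children v) :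
    lvl w = lvl v + 1 := by
  rw [hL.lvl_eq_lvl_parent_add_one w (ne_zero_of_mem_children h), (mem_children.mp h).1]

theorem exists_lvl_eq_of_le (hL : T.IsLevelFn lvl) (v : Fin (n + 1)) {m : ℕ} (h1 : 1 ≤ m)
    (hm : m ≤ lvl v) : ∃ w, lvl w = m := by
  induction v using WellFoundedLT.induction with
  | ind v ih =>
    rcases hm.eq_or_lt with rfl | hlt
    · exact ⟨v, rfl⟩
    have hv : v ≠ 0 := by
      rintro rfl
      rw [hL.lvl_zero] at hlt
      omega
    have := hL.lvl_eq_lvl_parent_add_one v hv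
    exact ih _ (T.parent_lt v hv) (by omega)

theorem exists_mem_subtree_lvl_eq (hL : T.IsLevelFn lvl) {l : ℕ} {c : ℕ → ℕ}
    (hle : ∀ v, lvl v ≤ l) (hmax : ∃ v, lvl v = l) (hc : ∀ v, (T.children v).card = c (lvl v))
    (v : Fin (n + 1)) : ∃ z ∈ T.subtree v, lvl z = l := by
  obtain ⟨v₀, hv₀⟩ := hmax
  induction v using WellFoundedGT.induction with
  | ind v ih =>
    rcases (hle v).eq_or_lt with hv | hv
    · exact ⟨v, mem_subtree_self v, hv⟩
    -- some vertex `w` lies one level below `v`, and its parent has as many children as `v`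
    obtain ⟨w, hw⟩ := hL.exists_lvl_eq_of_le v₀ (m := lvl v + 1) (by omega) (by omega)
    have hw0 : w ≠ 0 := fun h => by have := hL.one_le v; rw [h, hL.lvl_zero] at hw; omega
    have hcard : (T.children v).card = (T.children (T.parent w)).card := by
      have := hL.lvl_eq_lvl_parent_add_one w hw0
      rw [hc, hc]
      congr 1
      omega
    obtain ⟨u, hu⟩ : (T.children v).Nonempty := by
      rw [← Finset.card_pos, hcard, Finset.card_pos]
      exact ⟨w, mem_children_parent hw0⟩
    obtain ⟨z, hz, hlz⟩ := ih u (parent_lt_of_mem_children hu)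
    exact ⟨z, Relation.ReflTransGen.head hu hz, hlz⟩

end ParentTree.IsLevelFn

open ParentTree

theorem ParentTree.IsLevelFn.isEigenfunction_eval {n : ℕ} {T : ParentTree n}
    {lvl : Fin (n + 1) → ℕ} {l : ℕ} {c : ℕ → ℕ} {W : ℕ → ℝ[X]} (hL : T.IsLevelFn lvl)
    (hle : ∀ v, lvl v ≤ l) (hc : ∀ v, (T.children v).card = c (lvl v)) (hW0 : W 0 = 1)
    (hW1 : W 1 = X)
    (hWrec : ∀ j, 2 ≤ j → j ≤ l → W j = X * W (j - 1) - C (c (l + 1 - j) : ℝ) * W (j - 2))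
    (x : ℝ) : T.IsEigenfunction x ((W l).eval x) fun v => (W (l - lvl v)).eval x := by
  intro w
  have hw := hL.one_le w
  have hsum : ∑ u ∈ T.children w, (W (l - lvl u)).eval x =
      c (lvl w) * (W (l - lvl w - 1)).eval x := by
    rw [Finset.sum_congr rfl fun u hu => by rw [hL.lvl_of_mem_children hu, ← Nat.sub_sub],
      Finset.sum_const, hc, nsmul_eq_mul]
  have hpar : T.atParent ((W l).eval x) (fun v => (W (l - lvl v)).eval x) w =
      (W (l + 1 - lvl w)).eval x := by
    unfold atParent
    split_ifs with h
    · rw [h, hL.lvl_zero, Nat.add_sub_cancel]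
    · have := hL.lvl_eq_lvl_parent_add_one w h
      change (W (l - lvl (T.parent w))).eval x = _
      rw [show l - lvl (T.parent w) = l + 1 - lvl w by omega]
  rw [hsum, hpar]
  rcases (hle w).lt_or_eq with hlt | heq
  · have hrec := hWrec (l + 1 - lvl w) (by omega) (by omega)
    rw [show l + 1 - (l + 1 - lvl w) = lvl w by omega, show l + 1 - lvl w - 1 = l - lvl w by omega,
      show l + 1 - lvl w - 2 = l - lvl w - 1 by omega] at hrec
    rw [hrec]
    simp only [eval_sub, eval_mul, eval_X, eval_C]
    ring
  · have hleaf : c l = 0 := by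
      rw [← heq, ← hc, Finset.card_eq_zero, Finset.eq_empty_iff_forall_notMem]
      intro u hu
      have := hle u
      rw [hL.lvl_of_mem_children hu] at this
      omega
    simp [heq, hleaf, hW0, hW1]

theorem stmt_10 {n : ℕ} (T : ParentTree n)
    (lvl : Fin (n + 1) → ℕ)
    (hlvl0 : lvl 0 = 1)
    (hlvl : ∀ v, v ≠ 0 → lvl v = lvl (T.parent v) + 1)
    (l : ℕ)
    (hle : ∀ v, lvl v ≤ l) (hmax : ∃ v, lvl v = l)
    (c : ℕ → ℕ)
    (hc : ∀ v, (T.children v).card = c (lvl v))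
    (W : ℕ → Polynomial ℝ)
    (hW0 : W 0 = 1) (hW1 : W 1 = Polynomial.X)
    (hWrec : ∀ j, 2 ≤ j → j ≤ l → W j = Polynomial.X * W (j - 1) - Polynomial.C ((c (l + 1 - j) : ℝ)) * W (j - 2)) :
    {x : ℝ | (T.adjMat ℝ).charpoly.IsRoot x} =
      ⋃ j ∈ ({l} ∪ {j | 1 ≤ j ∧ j ≤ l - 1 ∧ 1 < c (l - j)} : Set ℕ),
        {x : ℝ | (W j).IsRoot x} := by
  have hL : T.IsLevelFn lvl := ⟨hlvl0, hlvl⟩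
  have hψ := hL.isEigenfunction_eval hle hc hW0 hW1 hWrec
  obtain ⟨v₀, hv₀⟩ := hmax
  ext x
  simp only [Set.mem_ofPred_eq, Set.mem_iUnion, exists_prop, Set.mem_union, Set.mem_singleton_iff,
    Matrix.isRoot_charpoly_iff_exists_mulVec_eq_smul, mulVec_eq_smul_iff_isEigenfunction]
  constructor
  · rintro ⟨f, hf0, hf⟩
    by_contra! hΦ
    refine hf0 ((hψ x).eq_zero hf (hΦ l (Or.inl rfl)) fun u hu hpu => ?_)
    by_contra! hcard
    have := hL.lvl_eq_lvl_parent_add_one u hu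
    have := hL.one_le (T.parent u)
    have := hle u
    refine hΦ (l - lvl (T.parent u)) (Or.inr ⟨by omega, by omega, ?_⟩) hpu
    rwa [show l - (l - lvl (T.parent u)) = lvl (T.parent u) by omega, ← hc]
  · rintro ⟨j, rfl | ⟨hj1, hjl, hcj⟩, hx⟩
    · refine ⟨_, fun h => ?_, hx.eq_zero ▸ hψ x⟩
      simpa [hv₀, hW0] using congrFun h v₀
    · obtain ⟨u, hu⟩ := hL.exists_lvl_eq_of_le v₀ (m := l - j) (by omega) (by omega)
      obtain ⟨v₁, h₁, v₂, h₂, hne⟩ := Finset.one_lt_card.mp (hc u ▸ hu ▸ hcj)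
      obtain ⟨z, hz, hlz⟩ := hL.exists_mem_subtree_lvl_eq hle ⟨v₀, hv₀⟩ hc v₁
      refine ⟨_, fun h => ?_, (hψ x).indicator_subtree_sub h₁ h₂ ?_ ?_⟩
      · have hz₂ := (disjoint_subtree_of_mem_children h₁ h₂ hne).notMem_of_mem_left hz
        simpa [Set.indicator_of_mem hz, Set.indicator_of_notMem hz₂, hlz, hW0] using congrFun h z
      · simpa [hu, show l - (l - j) = j by omega] using hx
      · simp only [hL.lvl_of_mem_children h₁, hL.lvl_of_mem_children h₂]
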